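/- Let N ≥ 2 and λ > 0. Assume w : ℝ^N → ℝ is continuous, positive, radially symmetric, and satisfies lim_{|x|→∞} w(x)|x|^{(N−1)/2} e^{√λ|x|} = σ for some σ > 0. Assume f : ℝ → ℝ is continuous, nondecreasing, f(t) = 0 for t ≤ 0, and |f(t)| ≤ D(|t|^{p₁} + |t|^{p₂}) for all t, where D > 0 and 1 < p₁ ≤ p₂. Assume ξ : ℝ^N → [0,1] is a C¹ function with ξ ≡ 0 on the ball B_ρ(0) and ξ ≡ 1 on ℝ^N \ B_{2ρ}(0), for some ρ > 0; for θ ∈ ℝ^N and R > 0 set Φ^{Rθ}(x) := ξ(x) w(x − Rθ). Let x₀, y ∈ ℝ^N with |x₀| = 1 and |y − x₀| = 2. Then there is a function η : (0,∞) → [0,∞) with η(R) → 0 as R → ∞ such that for every τ ≥ 0 and every R > 0: | ∫_{ℝ^N} ( f(τ Φ^{Ry}(x)) Φ^{Rx₀}(x) − f(τ w(x − Ry)) w(x − Rx₀) ) dx | ≤ max{τ^{p₁}, τ^{p₂}} η(R) R^{−(N−1)/2} e^{−2R√λ}. -/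

import Mathlib

/-!
Because `ξ = 1` outside `B_{2ρ}`, the integrand vanishes there. On `B_{2ρ}`, with
`u = w (x - R y)` and `v = w (x - R x₀)`, monotonicity of `f` bounds it by `f (τ u) v`, and
`|x - R q| ≥ R - 2ρ` for `|q| ≥ 1` gives `u, v ≤ B e^{-√λ R}`, as the asymptotics of `w`
and its continuity make `w (z) e^{√λ |z|}` bounded. The growth bound on `f` then
yields `max (τ^p₁, τ^p₂) e^{-(p₁ + 1) √λ R}` up to a constant. This exceeds the required decay
`e^{-2√λ R}` by the factor `e^{-(p₁ - 1) √λ R}`, which beats `R^{(N-1)/2}` since `p₁ > 1`.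
-/

open MeasureTheory Filter Metric

theorem exists_forall_le_mul_exp_neg_norm {E : Type*} [NormedAddCommGroup E] [ProperSpace E]
    {w : E → ℝ} {a s σ : ℝ} (hw : Continuous w) (hw0 : ∀ z, 0 ≤ w z) (ha : 0 ≤ a)
    (hlim : Tendsto (fun z => w z * ‖z‖ ^ a * Real.exp (s * ‖z‖))
      (comap (fun z : E => ‖z‖) atTop) (nhds σ)) :
    ∃ C, ∀ z, w z ≤ C * Real.exp (-(s * ‖z‖)) := by
  set g : E → ℝ := fun z => w z * Real.exp (s * ‖z‖)
  have hg_far : ∀ᶠ z in comap (fun z : E => ‖z‖) atTop, g z ≤ σ + 1 := by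
    filter_upwards [hlim.eventually_le_const (lt_add_one σ),
      tendsto_comap.eventually (eventually_ge_atTop 1)] with z hz hz1
    calc g z ≤ g z * ‖z‖ ^ a :=
          le_mul_of_one_le_right (mul_nonneg (hw0 z) (Real.exp_pos _).le)
            (Real.one_le_rpow hz1 ha)
      _ = w z * ‖z‖ ^ a * Real.exp (s * ‖z‖) := by ring
      _ ≤ σ + 1 := hz
  obtain ⟨r, hr⟩ := eventually_atTop.mp (eventually_comap.mp hg_far)
  obtain ⟨C₀, hC₀⟩ := (isCompact_closedBall (0 : E) r).bddAbove_image
    (hw.mul (Real.continuous_exp.comp (continuous_const.mul continuous_norm))).continuousOn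
  refine ⟨max C₀ (σ + 1), fun z => ?_⟩
  have hgz : g z ≤ max C₀ (σ + 1) := by
    rcases le_total ‖z‖ r with hz | hz
    · exact (hC₀ ⟨z, by simpa using hz, rfl⟩).trans (le_max_left _ _)
    · exact (hr ‖z‖ hz z rfl).trans (le_max_right _ _)
  calc w z = g z * Real.exp (-(s * ‖z‖)) := by
        rw [mul_assoc, ← Real.exp_add, add_neg_cancel, Real.exp_zero, mul_one]
    _ ≤ max C₀ (σ + 1) * Real.exp (-(s * ‖z‖)) := by gcongr

theorem sub_le_norm_sub_smul {E : Type*} [NormedAddCommGroup E] [NormedSpace ℝ E]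
    {x q : E} {R r : ℝ} (hR : 0 ≤ R) (hq : 1 ≤ ‖q‖) (hx : ‖x‖ ≤ r) :
    R - r ≤ ‖x - R • q‖ :=
  calc R - r ≤ R * ‖q‖ - ‖x‖ := by nlinarith
    _ = ‖R • q‖ - ‖x‖ := by rw [norm_smul, Real.norm_of_nonneg hR]
    _ ≤ ‖x - R • q‖ := by rw [norm_sub_rev]; exact norm_sub_norm_le _ _

theorem abs_integral_le_of_forall_notMem_eq_zero {α : Type*} [MeasurableSpace α]
    {μ : Measure α} {F : α → ℝ} {s : Set α} {C : ℝ} (hs : μ s < ⊤)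
    (hF : ∀ x ∉ s, F x = 0) (hC : ∀ x ∈ s, |F x| ≤ C) :
    |∫ x, F x ∂μ| ≤ C * μ.real s := by
  rw [← setIntegral_eq_integral_of_forall_compl_eq_zero hF]
  exact norm_setIntegral_le_of_norm_le_const (f := F) hs hC

theorem rpow_le_rpow_mul_rpow_of_le_mul {u B e p q : ℝ} (hu : 0 ≤ u) (hB : 0 ≤ B)
    (he0 : 0 < e) (he1 : e ≤ 1) (hq : 0 ≤ q) (hqp : q ≤ p) (hue : u ≤ B * e) :
    u ^ p ≤ B ^ p * e ^ q :=
  calc u ^ p ≤ (B * e) ^ p := Real.rpow_le_rpow hu hue (hq.trans hqp)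
    _ = B ^ p * e ^ p := Real.mul_rpow hB he0.le
    _ ≤ B ^ p * e ^ q :=
      mul_le_mul_of_nonneg_left (Real.rpow_le_rpow_of_exponent_ge he0 he1 hqp) (by positivity)

section PowerGrowth

variable {f : ℝ → ℝ} {D p₁ p₂ : ℝ}

theorem le_max_rpow_mul_of_abs_le (hD : 0 ≤ D) (hp₁ : 0 ≤ p₁) (hp : p₁ ≤ p₂)
    (hf : ∀ t, |f t| ≤ D * (|t| ^ p₁ + |t| ^ p₂)) {τ u B e : ℝ} (hτ : 0 ≤ τ) (hu : 0 ≤ u)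
    (hB : 0 ≤ B) (he0 : 0 < e) (he1 : e ≤ 1) (hue : u ≤ B * e) :
    f (τ * u) ≤ max (τ ^ p₁) (τ ^ p₂) * (D * (B ^ p₁ + B ^ p₂)) * e ^ p₁ := by
  have hu₁ := rpow_le_rpow_mul_rpow_of_le_mul hu hB he0 he1 hp₁ le_rfl hue
  have hu₂ := rpow_le_rpow_mul_rpow_of_le_mul hu hB he0 he1 hp₁ hp hue
  calc f (τ * u) ≤ |f (τ * u)| := le_abs_self _
    _ ≤ D * (|τ * u| ^ p₁ + |τ * u| ^ p₂) := hf _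
    _ = D * (τ ^ p₁ * u ^ p₁ + τ ^ p₂ * u ^ p₂) := by
      rw [abs_of_nonneg (mul_nonneg hτ hu), Real.mul_rpow hτ hu, Real.mul_rpow hτ hu]
    _ ≤ D * (max (τ ^ p₁) (τ ^ p₂) * (B ^ p₁ * e ^ p₁) +
          max (τ ^ p₁) (τ ^ p₂) * (B ^ p₂ * e ^ p₁)) := by
      gcongr
      exacts [le_max_left _ _, le_max_right _ _]
    _ = max (τ ^ p₁) (τ ^ p₂) * (D * (B ^ p₁ + B ^ p₂)) * e ^ p₁ := by ring

theorem abs_cutoff_mul_sub_mul_le (hfmono : Monotone f) (hf0 : f 0 = 0) (hD : 0 ≤ D)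
    (hp₁ : 0 ≤ p₁) (hp : p₁ ≤ p₂) (hf : ∀ t, |f t| ≤ D * (|t| ^ p₁ + |t| ^ p₂))
    {τ c u v B e : ℝ} (hτ : 0 ≤ τ) (hc : c ∈ Set.Icc (0 : ℝ) 1) (hu : 0 ≤ u) (hv : 0 ≤ v)
    (hB : 0 ≤ B) (he0 : 0 < e) (he1 : e ≤ 1) (hue : u ≤ B * e) (hve : v ≤ B * e) :
    |f (τ * (c * u)) * (c * v) - f (τ * u) * v| ≤
      max (τ ^ p₁) (τ ^ p₂) * (D * (B ^ p₁ + B ^ p₂) * B) * e ^ (p₁ + 1) := by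
  obtain ⟨hc0, hc1⟩ := hc
  have hcut_nonneg : 0 ≤ f (τ * (c * u)) := hf0 ▸ hfmono (by positivity)
  have hcut_le : f (τ * (c * u)) ≤ f (τ * u) :=
    hfmono (mul_le_mul_of_nonneg_left (mul_le_of_le_one_left hu hc1) hτ)
  calc |f (τ * (c * u)) * (c * v) - f (τ * u) * v| ≤ f (τ * u) * v :=
        abs_sub_le_of_nonneg_of_le (by positivity)
          (mul_le_mul hcut_le (mul_le_of_le_one_left hv hc1) (by positivity)
            (hcut_nonneg.trans hcut_le)) (mul_nonneg (hcut_nonneg.trans hcut_le) hv) le_rfl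
    _ ≤ (max (τ ^ p₁) (τ ^ p₂) * (D * (B ^ p₁ + B ^ p₂)) * e ^ p₁) * (B * e) :=
        mul_le_mul (le_max_rpow_mul_of_abs_le hD hp₁ hp hf hτ hu hB he0 he1 hue) hve hv
          (by positivity)
    _ = max (τ ^ p₁) (τ ^ p₂) * (D * (B ^ p₁ + B ^ p₂) * B) * e ^ (p₁ + 1) := by
        rw [Real.rpow_add_one he0.ne']; ring

end PowerGrowth

theorem exp_neg_rpow_add_one_eq {R : ℝ} (hR : 0 < R) (a s p : ℝ) :
    Real.exp (-(s * R)) ^ (p + 1) =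
      R ^ a * Real.exp (-((p - 1) * s) * R) * R ^ (-a) * Real.exp (-(2 * R * s)) := by
  rw [← Real.exp_mul, Real.rpow_neg hR.le, mul_right_comm (R ^ a),
    mul_inv_cancel₀ (Real.rpow_pos_of_pos hR a).ne', one_mul, ← Real.exp_add]
  ring_nf

theorem stmt10_general (N : ℕ) (hN : 2 ≤ N) (lam : ℝ) (hlam : 0 < lam)
    (w : EuclideanSpace ℝ (Fin N) → ℝ) (σ : ℝ)
    (hwcont : Continuous w) (hwpos : ∀ x, 0 < w x)
    (hwlim : Tendsto
      (fun x => w x * ‖x‖ ^ (((N : ℝ) - 1) / 2) * Real.exp (Real.sqrt lam * ‖x‖))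
      (comap (fun x : EuclideanSpace ℝ (Fin N) => ‖x‖) atTop) (nhds σ))
    (f : ℝ → ℝ) (D p₁ p₂ : ℝ) (hD : 0 < D) (hp₁ : 1 < p₁) (hp : p₁ ≤ p₂)
    (hfmono : Monotone f) (hf0 : ∀ t ≤ (0:ℝ), f t = 0)
    (hfgrowth : ∀ t : ℝ, |f t| ≤ D * (|t| ^ p₁ + |t| ^ p₂))
    (ρ : ℝ)
    (ξ : EuclideanSpace ℝ (Fin N) → ℝ)
    (hξ01 : ∀ x, ξ x ∈ Set.Icc (0:ℝ) 1)
    (hξ1 : ∀ x ∉ Metric.ball (0 : EuclideanSpace ℝ (Fin N)) (2 * ρ), ξ x = 1)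
    (x₀ y : EuclideanSpace ℝ (Fin N)) (hx₀ : ‖x₀‖ = 1) (hy : ‖y - x₀‖ = 2) :
    ∃ η : ℝ → ℝ, (∀ R, 0 ≤ η R) ∧ Tendsto η atTop (nhds 0) ∧
      ∀ τ ≥ (0:ℝ), ∀ R > (0:ℝ),
        |∫ x, (f (τ * (ξ x * w (x - R • y))) * (ξ x * w (x - R • x₀)) -
            f (τ * w (x - R • y)) * w (x - R • x₀))| ≤
          max (τ ^ p₁) (τ ^ p₂) * η R *
            R ^ (-(((N : ℝ) - 1) / 2)) * Real.exp (-(2 * R * Real.sqrt lam)) := by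
  have ha : 0 ≤ ((N : ℝ) - 1) / 2 := by
    have : (2 : ℝ) ≤ N := by exact_mod_cast hN
    linarith
  set s := Real.sqrt lam
  set a := ((N : ℝ) - 1) / 2
  have hs : 0 < s := Real.sqrt_pos.mpr hlam
  obtain ⟨C, hC⟩ := exists_forall_le_mul_exp_neg_norm hwcont (fun z => (hwpos z).le) ha hwlim
  have hC0 : 0 ≤ C := nonneg_of_mul_nonneg_left ((hwpos 0).le.trans (hC 0)) (Real.exp_pos _)
  set B := C * Real.exp (s * (2 * ρ))
  have hB : 0 ≤ B := by positivity
  have hw_far : ∀ q : EuclideanSpace ℝ (Fin N), 1 ≤ ‖q‖ → ∀ R ≥ (0 : ℝ), ∀ x ∈ ball 0 (2 * ρ),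
      w (x - R • q) ≤ B * Real.exp (-(s * R)) := fun q hq R hR x hx =>
    calc w (x - R • q) ≤ C * Real.exp (-(s * ‖x - R • q‖)) := hC _
      _ ≤ C * Real.exp (-(s * (R - 2 * ρ))) := by
        gcongr; exact sub_le_norm_sub_smul hR hq (mem_ball_zero_iff.mp hx).le
      _ = B * Real.exp (-(s * R)) := by rw [mul_assoc, ← Real.exp_add]; ring_nf
  have hy1 : 1 ≤ ‖y‖ := by linarith [norm_sub_le y x₀]
  set K := D * (B ^ p₁ + B ^ p₂) * B * volume.real (ball (0 : EuclideanSpace ℝ (Fin N)) (2 * ρ))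
  have hK : 0 ≤ K := by positivity
  refine ⟨fun R => K * (|R| ^ a * Real.exp (-((p₁ - 1) * s) * R)),
    fun R => mul_nonneg hK (by positivity), ?_, fun τ hτ R hR => ?_⟩
  · have hdecay := (tendsto_rpow_mul_exp_neg_mul_atTop_nhds_zero a ((p₁ - 1) * s)
      (mul_pos (sub_pos.mpr hp₁) hs)).const_mul K
    rw [mul_zero] at hdecay
    refine hdecay.congr' ?_
    filter_upwards [eventually_ge_atTop 0] with R hR
    rw [abs_of_nonneg hR]
  have he1 : Real.exp (-(s * R)) ≤ 1 := Real.exp_le_one_iff.mpr (by nlinarith)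
  calc _ ≤ max (τ ^ p₁) (τ ^ p₂) * (D * (B ^ p₁ + B ^ p₂) * B) * Real.exp (-(s * R)) ^ (p₁ + 1) *
        volume.real (ball (0 : EuclideanSpace ℝ (Fin N)) (2 * ρ)) :=
      abs_integral_le_of_forall_notMem_eq_zero measure_ball_lt_top
        (fun x hx => by simp [hξ1 x hx])
        (fun x hx => abs_cutoff_mul_sub_mul_le hfmono (hf0 0 le_rfl) hD.le (by linarith) hp
          hfgrowth hτ (hξ01 x) (hwpos _).le (hwpos _).le hB (Real.exp_pos _) he1
          (hw_far y hy1 R hR.le x hx) (hw_far x₀ hx₀.ge R hR.le x hx))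
    _ = _ := by dsimp only; rw [exp_neg_rpow_add_one_eq hR a s p₁, abs_of_pos hR]; ring

theorem stmt10 (N : ℕ) (hN : 2 ≤ N) (lam : ℝ) (hlam : 0 < lam)
    (w : EuclideanSpace ℝ (Fin N) → ℝ) (σ : ℝ) (hσ : 0 < σ)
    (hwcont : Continuous w) (hwpos : ∀ x, 0 < w x)
    (hwrad : ∀ x y : EuclideanSpace ℝ (Fin N), ‖x‖ = ‖y‖ → w x = w y)
    (hwlim : Tendsto
      (fun x => w x * ‖x‖ ^ (((N : ℝ) - 1) / 2) * Real.exp (Real.sqrt lam * ‖x‖))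
      (comap (fun x : EuclideanSpace ℝ (Fin N) => ‖x‖) atTop) (nhds σ))
    (f : ℝ → ℝ) (D p₁ p₂ : ℝ) (hD : 0 < D) (hp₁ : 1 < p₁) (hp : p₁ ≤ p₂)
    (hfcont : Continuous f) (hfmono : Monotone f) (hf0 : ∀ t ≤ (0:ℝ), f t = 0)
    (hfgrowth : ∀ t : ℝ, |f t| ≤ D * (|t| ^ p₁ + |t| ^ p₂))
    (ρ : ℝ) (hρ : 0 < ρ)
    (ξ : EuclideanSpace ℝ (Fin N) → ℝ) (hξ : ContDiff ℝ 1 ξ)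
    (hξ01 : ∀ x, ξ x ∈ Set.Icc (0:ℝ) 1)
    (hξ0 : ∀ x ∈ Metric.ball (0 : EuclideanSpace ℝ (Fin N)) ρ, ξ x = 0)
    (hξ1 : ∀ x ∉ Metric.ball (0 : EuclideanSpace ℝ (Fin N)) (2 * ρ), ξ x = 1)
    (x₀ y : EuclideanSpace ℝ (Fin N)) (hx₀ : ‖x₀‖ = 1) (hy : ‖y - x₀‖ = 2) :
    ∃ η : ℝ → ℝ, (∀ R, 0 ≤ η R) ∧ Tendsto η atTop (nhds 0) ∧
      ∀ τ ≥ (0:ℝ), ∀ R > (0:ℝ),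
        |∫ x, (f (τ * (ξ x * w (x - R • y))) * (ξ x * w (x - R • x₀)) -
            f (τ * w (x - R • y)) * w (x - R • x₀))| ≤
          max (τ ^ p₁) (τ ^ p₂) * η R *
            R ^ (-(((N : ℝ) - 1) / 2)) * Real.exp (-(2 * R * Real.sqrt lam)) :=
  stmt10_general N hN lam hlam w σ hwcont hwpos hwlim f D p₁ p₂ hD hp₁ hp hfmono hf0 hfgrowth ρ ξ
    hξ01 hξ1 x₀ y hx₀ hy
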